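/- Let k ≥ 1 be an integer and set ρ* = 1 − 1/(2k). Define Q_{k,0}(t) = −1 + (1/2 + ρ*/2)·(1+t)^{2k} + (1/2 − ρ*/2)·Σ_{j=0}^{k} C(2k,2j)·(1−t)^{2k−2j}·(−4t)^{j}. Then Q_{k,0}(t) ≥ 0 for all real t. -/

import Mathlib

/-!
Write `Q_{k,0}(t) = -1 + (1 - c) (1 + t)^{2k} + c S(t)` with `c = 1/(4k)` and `S` the binomial
sum. If `s² = -t`, then `1 - t ± 2s = (1 ± s)²`, so `S(t)` is the even part of `(1 + s)^{4k}`.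

For `t = -u² ≤ 0` this is `Σ_j C(4k,2j) u^{2j} ≥ 1 + C(4k,2) u²`; together with Bernoulli's
inequality `(1 + t)^{2k} ≥ 1 + 2kt` the linear terms in `t` cancel exactly.

For `t = r² ≥ 0` it is `Re (w²) = |w|² - 2 (Im w)²` with `w = (1 + ir)^{2k}`, and
`|w|² = (1 + t)^{2k}`. Since `Re (1 + ir) = 1`, `Im ((1 + ir)^n) = r Σ_{i<n} Re ((1 + ir)^i)`;
Cauchy–Schwarz with `(Re ((1 + ir)^i))² ≤ (1 + t)^i` and the geometric sum give
`(Im w)² ≤ 2k ((1 + t)^{2k} - 1)`, which is exactly what `c S(t)` can afford to lose.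
-/

open Finset Complex

lemma sum_range_two_mul_add_one_eq_sum_even {M : Type*} [AddCommMonoid M] {g : ℕ → M}
    (hg : ∀ m, Odd m → g m = 0) (n : ℕ) :
    ∑ m ∈ range (2 * n + 1), g m = ∑ j ∈ range (n + 1), g (2 * j) := by
  induction n with
  | zero => simp
  | succ n ih =>
    rw [show 2 * (n + 1) + 1 = 2 * n + 1 + 1 + 1 by ring, sum_range_succ, sum_range_succ, ih,
      hg _ (odd_two_mul_add_one n), add_zero, sum_range_succ _ (n + 1)]
    rfl

lemma add_pow_two_mul_add_sub_pow_two_mul {R : Type*} [CommRing R] (x y : R) (k : ℕ) :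
    (x + y) ^ (2 * k) + (x - y) ^ (2 * k)
      = 2 * ∑ j ∈ range (k + 1),
          ((2 * k).choose (2 * j) : R) * x ^ (2 * k - 2 * j) * y ^ (2 * j) := by
  rw [add_comm x y, sub_eq_neg_add, add_pow, add_pow, ← sum_add_distrib,
    sum_range_two_mul_add_one_eq_sum_even, mul_sum]
  · refine sum_congr rfl fun j _ => ?_
    rw [(even_two_mul j).neg_pow]
    ring
  · intro m hm
    rw [hm.neg_pow]
    ring

def evenChooseSum {R : Type*} [CommRing R] (k : ℕ) (t : R) : R :=
  ∑ j ∈ range (k + 1), ((2 * k).choose (2 * j) : R) * (1 - t) ^ (2 * k - 2 * j) * (-4 * t) ^ j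

lemma two_mul_evenChooseSum {R : Type*} [CommRing R] (k : ℕ) {s t : R} (hs : s ^ 2 = -t) :
    2 * evenChooseSum k t = (1 + s) ^ (4 * k) + (1 - s) ^ (4 * k) := by
  have hplus : (1 + s) ^ (4 * k) = (1 - t + 2 * s) ^ (2 * k) := by
    rw [show 4 * k = 2 * (2 * k) by ring, pow_mul]
    congr 1
    linear_combination hs
  have hminus : (1 - s) ^ (4 * k) = (1 - t - 2 * s) ^ (2 * k) := by
    rw [show 4 * k = 2 * (2 * k) by ring, pow_mul]
    congr 1
    linear_combination hs
  rw [hplus, hminus, add_pow_two_mul_add_sub_pow_two_mul, evenChooseSum]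
  congr 1
  refine sum_congr rfl fun j _ => ?_
  rw [pow_mul, show (2 * s) ^ 2 = -4 * t by linear_combination 4 * hs]

lemma evenChooseSum_ofReal (k : ℕ) (t : ℝ) :
    ((evenChooseSum k t : ℝ) : ℂ) = evenChooseSum k (t : ℂ) := by
  simp [evenChooseSum]

namespace Complex

lemma normSq_one_add_mul_I (r : ℝ) : normSq (1 + r * I) = 1 + r ^ 2 := by
  simpa using normSq_add_mul_I 1 r

lemma im_one_add_mul_I_pow (r : ℝ) (n : ℕ) :
    ((1 + r * I) ^ n).im = r * ∑ i ∈ range n, ((1 + r * I) ^ i).re := by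
  induction n with
  | zero => simp
  | succ n ih =>
    rw [pow_succ, mul_im, sum_range_succ, mul_add, ← ih]
    simp only [add_re, add_im, one_re, one_im, mul_re, mul_im, ofReal_re, ofReal_im, I_re, I_im]
    ring

lemma im_one_add_mul_I_pow_sq_le (r : ℝ) (n : ℕ) :
    ((1 + r * I) ^ n).im ^ 2 ≤ n * ((1 + r ^ 2) ^ n - 1) := by
  have hre : ∀ i, ((1 + r * I) ^ i).re ^ 2 ≤ (1 + r ^ 2) ^ i := fun i => by
    rw [← normSq_one_add_mul_I, ← map_pow, normSq_apply, ← sq, ← sq]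
    nlinarith [sq_nonneg ((1 + r * I) ^ i).im]
  calc ((1 + r * I) ^ n).im ^ 2
      = r ^ 2 * (∑ i ∈ range n, ((1 + r * I) ^ i).re) ^ 2 := by
        rw [im_one_add_mul_I_pow, mul_pow]
    _ ≤ r ^ 2 * (n * ∑ i ∈ range n, ((1 + r * I) ^ i).re ^ 2) := by
        gcongr
        simpa using sq_sum_le_card_mul_sum_sq (s := range n) (f := fun i => ((1 + r * I) ^ i).re)
    _ ≤ r ^ 2 * (n * ∑ i ∈ range n, (1 + r ^ 2) ^ i) := by gcongr with i; exact hre i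
    _ = n * ((1 + r ^ 2) ^ n - 1) := by
        rw [← geom_sum_mul, add_sub_cancel_left]
        ring

end Complex

lemma evenChooseSum_sq (k : ℕ) (r : ℝ) :
    evenChooseSum k (r ^ 2) = (1 + r ^ 2) ^ (2 * k) - 2 * ((1 + r * I) ^ (2 * k)).im ^ 2 := by
  set w := (1 + r * I) ^ (2 * k)
  have hconj : 1 - r * I = (starRingEnd ℂ) (1 + r * I) := by simp [Complex.ext_iff]
  have hsum : ((2 * evenChooseSum k (r ^ 2) : ℝ) : ℂ) = ((2 * (w ^ 2).re : ℝ) : ℂ) := by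
    rw [← add_conj, ofReal_mul, evenChooseSum_ofReal, ofReal_ofNat,
      two_mul_evenChooseSum k (s := (r : ℂ) * I) (by push_cast; rw [mul_pow, I_sq]; ring), hconj,
      ← map_pow, ← pow_mul, show 2 * k * 2 = 4 * k by ring]
  have hnormSq : normSq w = (1 + r ^ 2) ^ (2 * k) := by
    rw [map_pow, normSq_one_add_mul_I]
  have hre : (w ^ 2).re = normSq w - 2 * w.im ^ 2 := by
    rw [sq, mul_re, normSq_apply]
    ring
  rw [← hnormSq, ← hre]
  exact_mod_cast (mul_right_inj' two_ne_zero).1 (ofReal_injective hsum)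

lemma evenChooseSum_ge_of_nonneg (k : ℕ) {t : ℝ} (ht : 0 ≤ t) :
    (1 + t) ^ (2 * k) - 4 * k * ((1 + t) ^ (2 * k) - 1) ≤ evenChooseSum k t := by
  obtain ⟨r, rfl⟩ : ∃ r : ℝ, r ^ 2 = t := ⟨√t, Real.sq_sqrt ht⟩
  have him := Complex.im_one_add_mul_I_pow_sq_le r (2 * k)
  rw [evenChooseSum_sq]
  push_cast at him
  linarith

lemma evenChooseSum_ge_of_nonpos (k : ℕ) {t : ℝ} (ht : t ≤ 0) :
    1 - 2 * k * (4 * k - 1) * t ≤ evenChooseSum k t := by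
  obtain rfl | hk := k.eq_zero_or_pos
  · simp [evenChooseSum]
  obtain ⟨u, hu⟩ : ∃ u : ℝ, u ^ 2 = -t := ⟨√(-t), Real.sq_sqrt (neg_nonneg.2 ht)⟩
  have hsum := two_mul_evenChooseSum k hu
  rw [show 4 * k = 2 * (2 * k) by ring, add_pow_two_mul_add_sub_pow_two_mul] at hsum
  simp only [one_pow, mul_one] at hsum
  have hchoose : ((2 * (2 * k)).choose 2 : ℝ) = 2 * k * (4 * k - 1) := by
    rw [Nat.cast_choose_two]
    push_cast
    ring
  have hfirst : 1 + 2 * k * (4 * k - 1) * u ^ 2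
      ≤ ∑ j ∈ range (2 * k + 1), ((2 * (2 * k)).choose (2 * j) : ℝ) * u ^ (2 * j) :=
    calc 1 + 2 * k * (4 * k - 1) * u ^ 2
        = ∑ j ∈ range 2, ((2 * (2 * k)).choose (2 * j) : ℝ) * u ^ (2 * j) := by
          simp [sum_range_succ, hchoose]
      _ ≤ _ := sum_le_sum_of_subset_of_nonneg (range_subset_range.2 (by omega)) fun j _ _ => by
          rw [pow_mul]; positivity
  nlinarith

/-- Bernoulli's inequality applied to `(1 + t)^{2k} = (1 + (2t + t²))^k`, valid for every real `t`.
-/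
lemma one_add_mul_le_pow_two_mul (k : ℕ) (t : ℝ) : 1 + 2 * k * t ≤ (1 + t) ^ (2 * k) :=
  calc 1 + 2 * k * t ≤ 1 + k * (2 * t + t ^ 2) := by
        nlinarith [k.cast_nonneg (α := ℝ), sq_nonneg t]
    _ ≤ (1 + (2 * t + t ^ 2)) ^ k := one_add_mul_le_pow (by nlinarith [sq_nonneg (t + 1)]) k
    _ = (1 + t) ^ (2 * k) := by rw [pow_mul]; ring

theorem stmt_8 (k : ℕ) (hk : 1 ≤ k) (t : ℝ) :
    0 ≤ -1 + (1/2 + (1 - 1/(2*(k:ℝ)))/2) * (1+t)^(2*k)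
      + (1/2 - (1 - 1/(2*(k:ℝ)))/2) *
        ∑ j ∈ Finset.range (k+1),
          ((2*k).choose (2*j) : ℝ) * (1-t)^(2*k-2*j) * (-4*t)^j := by
  have hk' : (1 : ℝ) ≤ k := by exact_mod_cast hk
  have hc : 1/2 - (1 - 1/(2*(k:ℝ)))/2 = 1 / (4 * k) := by field_simp; ring
  have hc' : 1/2 + (1 - 1/(2*(k:ℝ)))/2 = 1 - 1 / (4 * k) := by field_simp; ring
  have hc_mul : 1 / (4 * k) * (4 * k : ℝ) = 1 := by field_simp
  have hc_nonneg : 0 ≤ 1 / (4 * (k : ℝ)) := by positivity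
  have hc_le_one : 1 / (4 * (k : ℝ)) ≤ 1 := by rw [div_le_one (by positivity)]; linarith
  change 0 ≤ -1 + _ * (1 + t) ^ (2 * k) + _ * evenChooseSum k t
  rw [hc, hc']
  rcases le_total 0 t with ht | ht
  · have hS := mul_nonneg hc_nonneg (sub_nonneg.2 (evenChooseSum_ge_of_nonneg k ht))
    linear_combination hS + ((1 + t) ^ (2 * k) - 1) * hc_mul
  · have hS := mul_nonneg hc_nonneg (sub_nonneg.2 (evenChooseSum_ge_of_nonpos k ht))
    have hR := mul_nonneg (sub_nonneg.2 hc_le_one) (sub_nonneg.2 (one_add_mul_le_pow_two_mul k t))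
    linear_combination hS + hR + 2 * k * t * hc_mul
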